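/- Let f be an absolutely continuous probability density on ℝ whose derivative f′ is itself absolutely continuous with ∫ V(y) |f″(y)| dy < ∞ for a measurable function V ≥ 1 for which V(y+s)/V(y) is bounded uniformly in y for s in any compact set. Then ‖f(·−s) − f + s f′‖_V = O(s²) as s → 0, where ‖u‖_V = ∫ V |u| dλ. -/

import Mathlib

/-!
Taylor's formula with integral remainder gives, pointwise,
`|f (y - s) - f y + s * f' y| ≤ |s| * ∫ r in Ι 0 s, |f'' (y - r)|`.
For `|s| ≤ 1` the weight can be moved inside, `V y ≤ M * V (y - r)`, and by Tonelli and
translation invariance of Lebesgue measure each `r ∈ Ι 0 s` then contributes `M * ‖f''‖_V`,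
so the total is at most `|s| * |s| * M * ‖f''‖_V`.
-/

open MeasureTheory Filter Asymptotics intervalIntegral Set
open scoped ENNReal Interval

theorem continuous_of_sub_eq_intervalIntegral {F F' : ℝ → ℝ}
    (hF : ∀ a b, F b - F a = ∫ x in a..b, F' x) (hF' : ∀ a b, IntervalIntegrable F' volume a b) :
    Continuous F := by
  have hprimitive : F = fun b => F 0 + ∫ x in (0 : ℝ)..b, F' x :=
    funext fun b => by linarith [hF 0 b]
  rw [hprimitive]
  exact continuous_const.add (continuous_primitive hF' 0)

theorem abs_comp_sub_sub_add_mul_le {f f' f'' : ℝ → ℝ}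
    (hf : ∀ a b, f b - f a = ∫ x in a..b, f' x) (hf' : ∀ a b, f' b - f' a = ∫ x in a..b, f'' x)
    (hf'' : ∀ a b, IntervalIntegrable f'' volume a b) (y s : ℝ) :
    |f (y - s) - f y + s * f' y| ≤ |s| * ∫ r in Ι 0 s, |f'' (y - r)| := by
  have hf'_cont : Continuous f' := continuous_of_sub_eq_intervalIntegral hf' hf''
  have hf'_sub (t : ℝ) : f' y - f' (y - t) = ∫ r in (0 : ℝ)..t, f'' (y - r) := by
    rw [integral_comp_sub_left, sub_zero, hf']
  have hremainder : f (y - s) - f y + s * f' y = ∫ t in (0 : ℝ)..s, (f' y - f' (y - t)) := by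
    rw [integral_sub intervalIntegrable_const
      ((by fun_prop : Continuous fun t => f' (y - t)).intervalIntegrable _ _),
      integral_comp_sub_left, sub_zero, ← hf, intervalIntegral.integral_const, smul_eq_mul, sub_zero]
    ring
  have hint : IntegrableOn (fun r => |f'' (y - r)|) (Ι 0 s) := by
    simpa [IntegrableOn] using ((hf'' y (y - s)).comp_sub_left y).def'.norm
  have hbound : ∀ t ∈ Ι 0 s, ‖f' y - f' (y - t)‖ ≤ ∫ r in Ι 0 s, |f'' (y - r)| := by
    intro t ht
    rw [hf'_sub]
    refine norm_integral_le_integral_norm_uIoc.trans (setIntegral_mono_set hint ?_ ?_)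
    · exact Eventually.of_forall fun r => abs_nonneg _
    · exact (uIoc_subset_uIoc_of_uIcc_subset_uIcc
        (uIcc_subset_uIcc left_mem_uIcc (uIoc_subset_uIcc ht))).eventuallyLE
  rw [hremainder, mul_comm]
  simpa using norm_integral_le_of_norm_le_const hbound

theorem lintegral_lintegral_comp_sub {G : Type*} [MeasurableSpace G] [AddGroup G]
    [MeasurableAdd₂ G] [MeasurableNeg G] (μ ν : Measure G) [SFinite μ] [SFinite ν]
    [μ.IsAddRightInvariant] {H : G → ℝ≥0∞} (hH : AEMeasurable H μ) :
    ∫⁻ x, ∫⁻ y, H (x - y) ∂ν ∂μ = ν univ * ∫⁻ x, H x ∂μ := by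
  rw [lintegral_lintegral_swap (f := fun x y => H (x - y))
    (hH.comp_quasiMeasurePreserving (quasiMeasurePreserving_sub_of_right_invariant μ ν))]
  simp only [lintegral_sub_right_eq_self H, lintegral_const, mul_comm]

section WeightedRemainder

variable {f f' f'' V : ℝ → ℝ} {C M s : ℝ}

theorem ofReal_mul_abs_comp_sub_sub_add_mul_le
    (hf : ∀ a b, f b - f a = ∫ x in a..b, f' x) (hf' : ∀ a b, f' b - f' a = ∫ x in a..b, f'' x)
    (hf'' : Integrable f'') (hV : ∀ y, 0 ≤ V y) (hM₀ : 0 ≤ M)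
    (hM : ∀ y t, |t| ≤ C → V (y + t) ≤ M * V y) (hs : |s| ≤ C) (y : ℝ) :
    ENNReal.ofReal (V y * |f (y - s) - f y + s * f' y|) ≤
      ENNReal.ofReal (|s| * M) * ∫⁻ r in Ι 0 s, ENNReal.ofReal (V (y - r) * |f'' (y - r)|) := by
  have hint : IntegrableOn (fun r => V y * |f'' (y - r)|) (Ι 0 s) :=
    ((hf''.comp_sub_left y).abs.const_mul (V y)).integrableOn
  have hweight : ∀ r ∈ Ι 0 s, V y ≤ M * V (y - r) := by
    intro r hr
    have hr : |r| ≤ |s| := by simpa using abs_sub_left_of_mem_uIcc (uIoc_subset_uIcc hr)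
    simpa using hM (y - r) r (hr.trans hs)
  calc ENNReal.ofReal (V y * |f (y - s) - f y + s * f' y|)
      ≤ ENNReal.ofReal (|s| * ∫ r in Ι 0 s, V y * |f'' (y - r)|) := by
        refine ENNReal.ofReal_le_ofReal ?_
        rw [MeasureTheory.integral_const_mul, mul_left_comm]
        exact mul_le_mul_of_nonneg_left
          (abs_comp_sub_sub_add_mul_le hf hf' (fun _ _ => hf''.intervalIntegrable) y s) (hV y)
    _ = ENNReal.ofReal |s| * ∫⁻ r in Ι 0 s, ENNReal.ofReal (V y * |f'' (y - r)|) := by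
        rw [ENNReal.ofReal_mul (abs_nonneg s), ofReal_integral_eq_lintegral_ofReal hint
          (Eventually.of_forall fun r => mul_nonneg (hV y) (abs_nonneg _))]
    _ ≤ ENNReal.ofReal |s| * ∫⁻ r in Ι 0 s,
          ENNReal.ofReal M * ENNReal.ofReal (V (y - r) * |f'' (y - r)|) := by
        gcongr ENNReal.ofReal |s| * ?_
        refine setLIntegral_mono' measurableSet_uIoc fun r hr => ?_
        rw [← ENNReal.ofReal_mul hM₀, ← mul_assoc]
        exact ENNReal.ofReal_le_ofReal
          (mul_le_mul_of_nonneg_right (hweight r hr) (abs_nonneg _))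
    _ = _ := by
        rw [lintegral_const_mul' _ _ ENNReal.ofReal_ne_top, ← mul_assoc,
          ← ENNReal.ofReal_mul (abs_nonneg s)]

theorem lintegral_ofReal_mul_abs_comp_sub_sub_add_mul_le
    (hf : ∀ a b, f b - f a = ∫ x in a..b, f' x) (hf' : ∀ a b, f' b - f' a = ∫ x in a..b, f'' x)
    (hf'' : Integrable f'') (hV : ∀ y, 0 ≤ V y) (hM₀ : 0 ≤ M)
    (hM : ∀ y t, |t| ≤ C → V (y + t) ≤ M * V y) (hs : |s| ≤ C)
    (hVf'' : AEMeasurable fun x => V x * |f'' x|) :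
    ∫⁻ y, ENNReal.ofReal (V y * |f (y - s) - f y + s * f' y|) ≤
      ENNReal.ofReal (M * s ^ 2) * ∫⁻ x, ENNReal.ofReal (V x * |f'' x|) := by
  calc ∫⁻ y, ENNReal.ofReal (V y * |f (y - s) - f y + s * f' y|)
      ≤ ∫⁻ y, ENNReal.ofReal (|s| * M) *
          ∫⁻ r in Ι 0 s, ENNReal.ofReal (V (y - r) * |f'' (y - r)|) :=
        lintegral_mono (ofReal_mul_abs_comp_sub_sub_add_mul_le hf hf' hf'' hV hM₀ hM hs)
    _ = ENNReal.ofReal (|s| * M) * (volume (Ι 0 s) * ∫⁻ x, ENNReal.ofReal (V x * |f'' x|)) := by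
        rw [lintegral_const_mul' _ _ ENNReal.ofReal_ne_top,
          lintegral_lintegral_comp_sub volume _ hVf''.ennreal_ofReal, Measure.restrict_apply_univ]
    _ = ENNReal.ofReal (M * s ^ 2) * ∫⁻ x, ENNReal.ofReal (V x * |f'' x|) := by
        rw [Real.volume_uIoc, sub_zero, ← mul_assoc, ← ENNReal.ofReal_mul (by positivity),
          mul_right_comm, abs_mul_abs_self, ← sq, mul_comm (s ^ 2)]

end WeightedRemainder

theorem stmt_10_general
    (f f' f'' : ℝ → ℝ)
    (hf''_meas : Measurable f'')
    -- f absolutely continuous with derivative f′: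
    (hFTC1 : ∀ a b : ℝ, f b - f a = ∫ x in a..b, f' x)
    -- f′ absolutely continuous with derivative f″:
    (hFTC2 : ∀ a b : ℝ, f' b - f' a = ∫ x in a..b, f'' x)
    (V : ℝ → ℝ) (hV : ∀ y, 1 ≤ V y)
    (hVf'' : Integrable (fun y => V y * |f'' y|))
    -- V(y+s)/V(y) bounded uniformly in y for s in compacts:
    (hVratio : ∀ C > (0 : ℝ), ∃ M : ℝ, ∀ y s : ℝ, |s| ≤ C → V (y + s) ≤ M * V y) :
    (fun s : ℝ => ∫ y, V y * |f (y - s) - f y + s * f' y|)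
      =O[nhds 0] fun s => s ^ 2 := by
  have hV₀ (y : ℝ) : 0 ≤ V y := zero_le_one.trans (hV y)
  obtain ⟨M, hM⟩ := hVratio 1 one_pos
  have hM₀ : 0 ≤ M := by
    have h := hM 0 0 (by simp)
    rw [add_zero] at h
    nlinarith [hV 0]
  have hf'' : Integrable f'' :=
    hVf''.mono' hf''_meas.aestronglyMeasurable
      (Eventually.of_forall fun y => le_mul_of_one_le_left (abs_nonneg _) (hV y))
  have hK : ∫⁻ x, ENNReal.ofReal (V x * |f'' x|) = ENNReal.ofReal (∫ x, V x * |f'' x|) :=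
    (ofReal_integral_eq_lintegral_ofReal hVf''
      (Eventually.of_forall fun x => mul_nonneg (hV₀ x) (abs_nonneg _))).symm
  have hK₀ : 0 ≤ ∫ x, V x * |f'' x| := integral_nonneg fun x => mul_nonneg (hV₀ x) (abs_nonneg _)
  refine IsBigO.of_bound (M * ∫ x, V x * |f'' x|) ?_
  filter_upwards [Metric.closedBall_mem_nhds (0 : ℝ) one_pos] with s hs
  rw [mem_closedBall_zero_iff, Real.norm_eq_abs] at hs
  refine (norm_integral_le_lintegral_norm _).trans
    (ENNReal.toReal_le_of_le_ofReal (by positivity) ?_)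
  have hbound := lintegral_ofReal_mul_abs_comp_sub_sub_add_mul_le hFTC1 hFTC2 hf'' hV₀ hM₀ hM hs
    hVf''.aemeasurable
  rw [hK, ← ENNReal.ofReal_mul (by positivity)] at hbound
  simpa [abs_of_nonneg (hV₀ _), mul_right_comm M] using hbound

/-- If f′ is absolutely continuous with ‖f″‖_V < ∞ and V has locally bounded
translation ratios, then ‖f(·−s) − f + s f′‖_V = O(s²) as s → 0. -/
theorem stmt_10
    (f f' f'' : ℝ → ℝ) (hf_meas : Measurable f) (hf'_meas : Measurable f')
    (hf''_meas : Measurable f'')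
    (hf_nonneg : ∀ y, 0 ≤ f y) (hf_prob : ∫ y, f y = 1)
    -- f absolutely continuous with derivative f′:
    (hFTC1 : ∀ a b : ℝ, f b - f a = ∫ x in a..b, f' x)
    -- f′ absolutely continuous with derivative f″:
    (hFTC2 : ∀ a b : ℝ, f' b - f' a = ∫ x in a..b, f'' x)
    (V : ℝ → ℝ) (hV_meas : Measurable V) (hV : ∀ y, 1 ≤ V y)
    (hVf'' : Integrable (fun y => V y * |f'' y|))
    -- V(y+s)/V(y) bounded uniformly in y for s in compacts:
    (hVratio : ∀ C > (0 : ℝ), ∃ M : ℝ, ∀ y s : ℝ, |s| ≤ C → V (y + s) ≤ M * V y) :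
    (fun s : ℝ => ∫ y, V y * |f (y - s) - f y + s * f' y|)
      =O[nhds 0] fun s => s ^ 2 :=
  stmt_10_general f f' f'' hf''_meas hFTC1 hFTC2 V hV hVf'' hVratio
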